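/- arXiv:2511.17503 — 2 statements merged into one kernel-verified Lean document; each statement's English description precedes it below -/
import Mathlib

section
/- Let C be a Hermitian self-orthogonal code of odd length n over F_{q^2}. Then C is contained in a Hermitian self-orthogonal code of dimension (n-1)/2. -/
/-!
For `|K| = q²` the Frobenius `σ x = x ^ q` is an involution of `K`, and its norm `t ↦ σ t * t`
maps onto the fixed field: in the cyclic group `Kˣ` of order `(q + 1) (q - 1)` every element
killed by `q - 1` is a `(q + 1)`-th power. Consequently, for a Hermitian form `B`, some
nontrivial combination of any two vectors `x, y` is isotropic: orthogonalise `y` against `x` to `y'` and take `x + t • y'`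
with `σ t * t = -B x x / B y' y'`.

If `C` is self-orthogonal and `2 dim C + 2 ≤ n`, then `C^⊥` has dimension `n - dim C ≥ dim C + 2`,
so it contains `x ∉ C` and `y ∉ C + K x`; the isotropic combination of `x` and `y` lies in
`C^⊥ \ C` and enlarges `C` by one dimension. Since `2 dim C ≤ n` and `n` is odd, repeating this
reaches dimension `(n - 1) / 2`.
-/

open Module

theorem IsCyclic.exists_pow_eq_of_pow_eq_one {G : Type*} [Group G] [Finite G] [IsCyclic G]
    {d m : ℕ} (hcard : Nat.card G = d * m) {a : G} (ha : a ^ m = 1) : ∃ t : G, t ^ d = a := by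
  obtain ⟨g, hg⟩ := IsCyclic.exists_generator (α := G)
  obtain ⟨k, rfl⟩ := mem_powers_iff_mem_zpowers.mpr (hg a)
  have hm : 0 < m := Nat.pos_of_mul_pos_left (hcard ▸ Nat.card_pos)
  have hdvd : d * m ∣ k * m := by
    rw [← hcard, ← orderOf_eq_card_of_forall_mem_zpowers hg]
    exact orderOf_dvd_of_pow_eq_one (by rwa [pow_mul])
  obtain ⟨j, rfl⟩ := (Nat.mul_dvd_mul_iff_right hm).mp hdvd
  exact ⟨g ^ j, by rw [← pow_mul, mul_comm]⟩

theorem FiniteField.exists_pow_add_one_eq {K : Type*} [Field K] [Fintype K] {q : ℕ}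
    (hK : Fintype.card K = q ^ 2) {a : K} (ha : a ^ q = a) : ∃ t : K, t ^ (q + 1) = a := by
  rcases eq_or_ne a 0 with rfl | ha0
  · exact ⟨0, zero_pow q.succ_ne_zero⟩
  have hq : q ≠ 0 := by rintro rfl; simp at hK
  have hcard : Nat.card Kˣ = (q + 1) * (q - 1) := by
    rw [Nat.card_units, Nat.card_eq_fintype_card, hK, ← Nat.sq_sub_sq, one_pow]
  have hunit : Units.mk0 a ha0 ^ (q - 1) = 1 := by
    ext
    rw [Units.val_pow_eq_pow_val, Units.val_mk0, Units.val_one,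
      pow_sub₀ a ha0 (Nat.one_le_iff_ne_zero.mpr hq), ha, pow_one, mul_inv_cancel₀ ha0]
  obtain ⟨t, ht⟩ := IsCyclic.exists_pow_eq_of_pow_eq_one hcard hunit
  exact ⟨t, by simpa using congrArg Units.val ht⟩

namespace LinearMap

variable {K V : Type*} [Field K] [AddCommGroup V] [Module K V] {σ : K →+* K}
  {B : V →ₛₗ[σ] V →ₗ[K] K}

theorem IsSymm.exists_isotropic_smul_add_smul (hB : B.IsSymm)
    (hnorm : ∀ a, σ a = a → ∃ t, σ t * t = a) (x y : V) :
    ∃ a b : K, (a ≠ 0 ∨ b ≠ 0) ∧ B (a • x + b • y) (a • x + b • y) = 0 := by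
  by_cases hx : B x x = 0
  · exact ⟨1, 0, Or.inl one_ne_zero, by simpa using hx⟩
  set c := B x y / B x x
  set y' := y - c • x
  have hxy' : B x y' = 0 := by simp [y', c, hx]
  have hy'x : B y' x = 0 := by rw [← hB.eq, hxy', map_zero]
  by_cases hy' : B y' y' = 0
  · refine ⟨-c, 1, Or.inr one_ne_zero, ?_⟩
    rwa [one_smul, neg_smul, neg_add_eq_sub]
  obtain ⟨t, ht⟩ := hnorm (-(B x x / B y' y')) (by simp [map_div₀, hB.eq])
  refine ⟨1 - t * c, t, ?_, ?_⟩
  · by_cases ht0 : t = 0 <;> simp [ht0]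
  · have hv : (1 - t * c) • x + t • y = x + t • y' := by
      simp only [y', smul_sub, sub_smul, one_smul, mul_smul]; abel
    simp only [hv, map_add, map_smulₛₗ, LinearMap.add_apply, LinearMap.smul_apply, smul_eq_mul,
      RingHom.id_apply, hxy', hy'x, mul_zero, zero_add, add_zero]
    have hnt : σ t * t * B y' y' = -B x x := by rw [ht]; field_simp
    linear_combination hnt

theorem IsRefl.sup_span_singleton_le_orthogonalBilin (hB : B.IsRefl) {C : Submodule K V} {v : V}
    (hC : C ≤ C.orthogonalBilin B) (hv : v ∈ C.orthogonalBilin B) (hvv : B v v = 0) :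
    C ⊔ K ∙ v ≤ (C ⊔ K ∙ v).orthogonalBilin B := by
  intro z hz w hw
  obtain ⟨c, hc, _, hs, rfl⟩ := Submodule.mem_sup.mp hz
  obtain ⟨a, rfl⟩ := Submodule.mem_span_singleton.mp hs
  obtain ⟨c', hc', _, hs', rfl⟩ := Submodule.mem_sup.mp hw
  obtain ⟨b, rfl⟩ := Submodule.mem_span_singleton.mp hs'
  simp [hC hc c' hc', hv c' hc', hB _ _ (hv c hc), hvv]

theorem IsSymm.exists_isotropic_mem_notMem [FiniteDimensional K V] (hB : B.IsSymm)
    (hnorm : ∀ a, σ a = a → ∃ t, σ t * t = a) {C W : Submodule K V} (hCW : C ≤ W)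
    (hdim : finrank K C + 2 ≤ finrank K W) : ∃ v ∈ W, v ∉ C ∧ B v v = 0 := by
  obtain ⟨x, hxW, hxC⟩ := SetLike.exists_of_lt
    (Submodule.lt_of_le_of_finrank_lt_finrank hCW (by omega))
  have hU : C ⊔ K ∙ x < W :=
    Submodule.lt_of_le_of_finrank_lt_finrank
      (sup_le hCW ((Submodule.span_singleton_le_iff_mem x W).mpr hxW))
      (by rw [Submodule.finrank_sup_span_singleton hxC]; omega)
  obtain ⟨y, hyW, hyU⟩ := SetLike.exists_of_lt hU
  obtain ⟨a, b, hab, hv⟩ := hB.exists_isotropic_smul_add_smul hnorm x y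
  refine ⟨a • x + b • y, W.add_mem (W.smul_mem a hxW) (W.smul_mem b hyW), fun hvC => ?_, hv⟩
  by_cases hb : b = 0
  · subst hb
    have ha : a ≠ 0 := hab.resolve_right (not_not.mpr rfl)
    exact hxC ((C.smul_mem_iff ha).mp (by simpa using hvC))
  · refine hyU ((Submodule.smul_mem_iff _ hb).mp ?_)
    rw [show b • y = (a • x + b • y) - a • x by abel]
    exact Submodule.sub_mem _ (Submodule.mem_sup_left hvC)
      (Submodule.mem_sup_right (Submodule.smul_mem _ a (Submodule.mem_span_singleton_self x)))

end LinearMap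

section HermitianForm

variable {K ι : Type*} [Field K]

def piConj (σ : K →+* K) : (ι → K) →ₛₗ[σ] (ι → K) where
  toFun x i := σ (x i)
  map_add' x y := funext fun i => map_add σ (x i) (y i)
  map_smul' a x := funext fun i => map_mul σ a (x i)

section Involutive

variable {σ : K →+* K} (hσ : Function.Involutive σ)
include hσ

theorem piConj_piConj (x : ι → K) : piConj σ (piConj σ x) = x :=
  funext fun i => hσ (x i)

theorem finrank_comap_piConj (C : Submodule K (ι → K)) :
    finrank K (C.comap (piConj σ)) = finrank K C := by
  let e : C.comap (piConj σ) ≃+ C :=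
    { toFun x := ⟨piConj σ x, x.2⟩
      invFun x := ⟨piConj σ x, by simp [piConj_piConj hσ]⟩
      left_inv x := Subtype.ext (piConj_piConj hσ x.1)
      right_inv x := Subtype.ext (piConj_piConj hσ x.1)
      map_add' x y := Subtype.ext (map_add _ _ _) }
  exact congrArg Cardinal.toNat (rank_eq_of_equiv_equiv σ e hσ.bijective
    fun a x => Subtype.ext (map_smulₛₗ (piConj σ) a x.1))

end Involutive

variable [Fintype ι]

def hermitianForm (σ : K →+* K) : (ι → K) →ₛₗ[σ] (ι → K) →ₗ[K] K :=
  (dotProductBilin K K).comp (piConj σ)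

theorem hermitianForm_apply (σ : K →+* K) (x y : ι → K) :
    hermitianForm σ x y = ∑ i, σ (x i) * y i :=
  rfl

variable {σ : K →+* K} (hσ : Function.Involutive σ)
include hσ

theorem isSymm_hermitianForm : (hermitianForm (ι := ι) σ).IsSymm :=
  ⟨fun x y => by simp only [hermitianForm_apply, map_sum, map_mul, hσ _, mul_comm]⟩

/-- Since `piConj σ` is an involution, `C.comap (piConj σ)` is the conjugate code `σ(C)`. -/
theorem orthogonalBilin_hermitianForm (C : Submodule K (ι → K)) :
    C.orthogonalBilin (hermitianForm σ) =
      (C.comap (piConj σ)).orthogonalBilin (dotProductBilin K K) := by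
  ext y
  simp only [Submodule.mem_orthogonalBilin_iff, Submodule.mem_comap]
  constructor
  · intro h z hz
    rw [← piConj_piConj hσ z]
    exact h _ hz
  · intro h x hx
    exact h _ (by rwa [piConj_piConj hσ])

theorem finrank_orthogonalBilin_hermitianForm (C : Submodule K (ι → K)) :
    finrank K (C.orthogonalBilin (hermitianForm σ)) = Fintype.card ι - finrank K C := by
  have hnd : (dotProductBilin K K : LinearMap.BilinForm K (ι → K)).Nondegenerate :=
    ⟨fun x hx => dotProduct_eq_zero x hx, fun y hy => dotProduct_eq_zero y fun x => by
      simpa [dotProduct_comm] using hy x⟩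
  rw [orthogonalBilin_hermitianForm hσ, ← LinearMap.BilinForm.orthogonal,
    LinearMap.BilinForm.finrank_orthogonal hnd, finrank_comap_piConj hσ,
    finrank_fintype_fun_eq_card]

theorem two_mul_finrank_le_card_of_selfOrthogonal {C : Submodule K (ι → K)}
    (hC : C ≤ C.orthogonalBilin (hermitianForm σ)) : 2 * finrank K C ≤ Fintype.card ι := by
  have h := Submodule.finrank_mono hC
  rw [finrank_orthogonalBilin_hermitianForm hσ] at h
  have := (Submodule.finrank_le C).trans_eq (finrank_fintype_fun_eq_card K)
  omega

theorem exists_selfOrthogonal_finrank_succ (hnorm : ∀ a, σ a = a → ∃ t, σ t * t = a)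
    {C : Submodule K (ι → K)} (hC : C ≤ C.orthogonalBilin (hermitianForm σ))
    (hdim : 2 * finrank K C + 2 ≤ Fintype.card ι) :
    ∃ D, C ≤ D ∧ D ≤ D.orthogonalBilin (hermitianForm σ) ∧ finrank K D = finrank K C + 1 := by
  have hB := isSymm_hermitianForm (ι := ι) hσ
  obtain ⟨v, hv, hvC, hvv⟩ := hB.exists_isotropic_mem_notMem hnorm hC
    (by rw [finrank_orthogonalBilin_hermitianForm hσ]; omega)
  exact ⟨C ⊔ K ∙ v, le_sup_left, hB.isRefl.sup_span_singleton_le_orthogonalBilin hC hv hvv,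
    Submodule.finrank_sup_span_singleton hvC⟩

theorem exists_selfOrthogonal_le_finrank_eq (hnorm : ∀ a, σ a = a → ∃ t, σ t * t = a)
    {C : Submodule K (ι → K)} (hC : C ≤ C.orthogonalBilin (hermitianForm σ)) {m : ℕ}
    (hCm : finrank K C ≤ m) (hm : 2 * m ≤ Fintype.card ι) :
    ∃ D, C ≤ D ∧ D ≤ D.orthogonalBilin (hermitianForm σ) ∧ finrank K D = m := by
  induction m, hCm using Nat.le_induction with
  | base => exact ⟨C, le_rfl, hC, rfl⟩
  | succ m _ ih =>
    obtain ⟨D, hCD, hD, rfl⟩ := ih (by omega)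
    obtain ⟨E, hDE, hE, hEdim⟩ := exists_selfOrthogonal_finrank_succ hσ hnorm hD (by omega)
    exact ⟨E, hCD.trans hDE, hE, hEdim⟩

end HermitianForm

/-- every Hermitian self-orthogonal code of odd length n over F_{q^2}
is contained in a Hermitian self-orthogonal code of dimension (n-1)/2. -/
theorem stmt6 (q : ℕ) (hq : ∃ p e : ℕ, p.Prime ∧ 0 < e ∧ q = p ^ e)
    (K : Type) [Field K] [Fintype K] (hK : Fintype.card K = q ^ 2)
    (n : ℕ) (hn : Odd n)
    (C : Submodule K (Fin n → K))
    (hso : ∀ x ∈ C, ∀ y ∈ C, ∑ i, (x i) ^ q * y i = 0) :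
    ∃ D : Submodule K (Fin n → K), C ≤ D ∧ Module.finrank K D = (n - 1) / 2 ∧
      ∀ x ∈ D, ∀ y ∈ D, ∑ i, (x i) ^ q * y i = 0 := by
  obtain ⟨p, e, hp, he, rfl⟩ := hq
  have : CharP K p := (CharP.charP_iff_prime_eq_zero hp).mpr <| by
    have h := FiniteField.cast_card_eq_zero K
    rwa [hK, ← pow_mul, Nat.cast_pow, pow_eq_zero_iff (by omega)] at h
  have : ExpChar K p := ExpChar.prime hp
  set σ := iterateFrobenius K p e
  have hσ : Function.Involutive σ := fun x => by
    rw [iterateFrobenius_def, iterateFrobenius_def, ← pow_mul, ← sq, ← hK, FiniteField.pow_card]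
  have hnorm : ∀ a, σ a = a → ∃ t, σ t * t = a := fun a ha => by
    simpa [σ, iterateFrobenius_def, pow_succ] using FiniteField.exists_pow_add_one_eq hK ha
  have hC : C ≤ C.orthogonalBilin (hermitianForm σ) := fun y hy x hx => by
    simpa [hermitianForm_apply, σ, iterateFrobenius_def] using hso x hx y hy
  have hCdim := two_mul_finrank_le_card_of_selfOrthogonal hσ hC
  rw [Fintype.card_fin] at hCdim
  obtain ⟨D, hCD, hD, hDdim⟩ := exists_selfOrthogonal_le_finrank_eq hσ hnorm hC
    (m := (n - 1) / 2) (by obtain ⟨k, rfl⟩ := hn; omega) (by rw [Fintype.card_fin]; omega)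
  refine ⟨D, hCD, hDdim, fun x hx y hy => ?_⟩
  simpa [hermitianForm_apply, σ, iterateFrobenius_def] using hD hy x hx
end

section
/- Let q be an odd prime power and let C be an [n,k] Euclidean self-orthogonal code over F_q with n odd. Then there exists a chain of Euclidean self-orthogonal codes C = C_0 ⊆ C_1 ⊆ ... ⊆ C_r with r = (n-1)/2 - k and dim C_{i+1} = dim C_i + 1; in particular C is contained in a Euclidean self-orthogonal code of dimension (n-1)/2. -/
/-!
Over a finite field every bilinear form in at least three variables has a nonzero isotropic
vector, by Chevalley–Warning applied to the quadratic polynomial `B(x, x)`. If `C` is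
self-orthogonal of dimension `k` in a nondegenerate space of dimension `n ≥ 2k + 3`, a
complement of `C` meets `C^⊥` (of dimension `n - k`) in dimension at least `n - 2k ≥ 3`; an
isotropic vector `v` there lies in `C^⊥ \ C`, and `C + ⟨v⟩` is self-orthogonal of dimension
`k + 1`. For odd `n` this step can be repeated until the dimension reaches `(n - 1) / 2`.
-/

open Module
open LinearMap (BilinForm)

namespace LinearMap.BilinForm

variable {F V : Type*} [Field F] [AddCommGroup V] [Module F V]
variable {B : BilinForm F V} {C : Submodule F V}

theorem sup_span_singleton_le_orthogonal (hR : B.IsRefl) (hC : C ≤ B.orthogonal C) {v : V}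
    (hv : v ∈ B.orthogonal C) (hvv : B v v = 0) :
    C ⊔ F ∙ v ≤ B.orthogonal (C ⊔ F ∙ v) := by
  have hvC : ∀ x ∈ C, B v x = 0 := fun x hx => hR x v (hv x hx)
  rintro x hx y hy
  obtain ⟨a, ha, s, hs, rfl⟩ := Submodule.mem_sup.mp hx
  obtain ⟨b, hb, t, ht, rfl⟩ := Submodule.mem_sup.mp hy
  obtain ⟨s, rfl⟩ := Submodule.mem_span_singleton.mp hs
  obtain ⟨t, rfl⟩ := Submodule.mem_span_singleton.mp ht
  simp [hC ha b hb, hv b hb, hvC a ha, hvv]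

variable [FiniteDimensional F V]

theorem exists_ne_zero_apply_self_eq_zero [Finite F] (B : BilinForm F V)
    (h : 3 ≤ finrank F V) : ∃ v ≠ 0, B v v = 0 := by
  classical
  have := Fintype.ofFinite F
  obtain ⟨p, _⟩ := CharP.exists F
  let b := Module.finBasis F V
  let P : MvPolynomial (Fin (finrank F V)) F :=
    ∑ i, ∑ j, MvPolynomial.C (B (b i) (b j)) * MvPolynomial.X i * MvPolynomial.X j
  have hP : P.IsHomogeneous 2 :=
    .sum _ _ _ fun i _ => .sum _ _ _ fun j _ =>
      ((MvPolynomial.isHomogeneous_C _ _).mul (MvPolynomial.isHomogeneous_X _ _)).mul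
        (MvPolynomial.isHomogeneous_X _ _)
  have hEval (c : Fin (finrank F V) → F) :
      MvPolynomial.eval c P = B (b.equivFun.symm c) (b.equivFun.symm c) := by
    simp only [P, Basis.equivFun_symm_apply, map_sum, map_smul, LinearMap.sum_apply,
      LinearMap.smul_apply, smul_eq_mul, MvPolynomial.eval_mul, MvPolynomial.eval_C,
      MvPolynomial.eval_X, Finset.mul_sum]
    exact Finset.sum_comm.trans
      (Finset.sum_congr rfl fun _ _ => Finset.sum_congr rfl fun _ _ => by ring)
  have hdvd : p ∣ Fintype.card { c // MvPolynomial.eval c P = 0 } :=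
    char_dvd_card_solutions p (by simpa using hP.totalDegree_le.trans_lt h)
  have hzero : MvPolynomial.eval 0 P = 0 := by rw [hEval]; simp
  have hcard : 1 < Fintype.card { c // MvPolynomial.eval c P = 0 } :=
    (CharP.char_is_prime F p).one_lt.trans_le
      (Nat.le_of_dvd (Fintype.card_pos_iff.mpr ⟨⟨0, hzero⟩⟩) hdvd)
  obtain ⟨⟨c, hc⟩, hc0⟩ := Fintype.exists_ne_of_one_lt_card hcard ⟨0, hzero⟩
  refine ⟨b.equivFun.symm c, ?_, (hEval c).symm.trans hc⟩
  rw [Ne, LinearEquiv.map_eq_zero_iff]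
  exact fun h => hc0 (Subtype.ext h)

theorem two_mul_finrank_le_of_le_orthogonal (hB : B.Nondegenerate) (hC : C ≤ B.orthogonal C) :
    2 * finrank F C ≤ finrank F V := by
  have := Submodule.finrank_mono hC
  rw [finrank_orthogonal hB] at this
  have := C.finrank_le
  omega

theorem exists_apply_self_eq_zero_mem_orthogonal_notMem [Finite F] (hB : B.Nondegenerate)
    (h : 2 * finrank F C + 3 ≤ finrank F V) :
    ∃ v ∈ B.orthogonal C, v ∉ C ∧ B v v = 0 := by
  obtain ⟨U, hU⟩ := C.exists_isCompl
  have hUC : finrank F U + finrank F C = finrank F V := by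
    rw [add_comm]; exact Submodule.finrank_add_eq_of_isCompl hU
  have hWU : 3 ≤ finrank F ↥(B.orthogonal C ⊓ U) := by
    have := Submodule.finrank_sup_add_finrank_inf_eq (B.orthogonal C) U
    have := (B.orthogonal C ⊔ U).finrank_le
    rw [finrank_orthogonal hB] at *
    omega
  obtain ⟨⟨v, hvW, hvU⟩, hv0, hvv⟩ := exists_ne_zero_apply_self_eq_zero (B.restrict _) hWU
  refine ⟨v, hvW, fun hvC => hv0 ?_, hvv⟩
  exact Subtype.ext (hU.disjoint.le_bot ⟨hvC, hvU⟩)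

theorem exists_le_finrank_succ_le_orthogonal [Finite F] (hB : B.Nondegenerate) (hR : B.IsRefl)
    (hC : C ≤ B.orthogonal C) (h : 2 * finrank F C + 3 ≤ finrank F V) :
    ∃ C', C ≤ C' ∧ finrank F C' = finrank F C + 1 ∧ C' ≤ B.orthogonal C' := by
  obtain ⟨v, hv, hvC, hvv⟩ := exists_apply_self_eq_zero_mem_orthogonal_notMem hB h
  exact ⟨C ⊔ F ∙ v, le_sup_left, Submodule.finrank_sup_span_singleton hvC,
    sup_span_singleton_le_orthogonal hR hC hv hvv⟩

theorem exists_chain_le_orthogonal [Finite F] (hB : B.Nondegenerate) (hR : B.IsRefl)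
    (hC : C ≤ B.orthogonal C) (r : ℕ) (h : 2 * (finrank F C + r) < finrank F V) :
    ∃ Cs : ℕ → Submodule F V, Cs 0 = C ∧ Monotone Cs ∧
      ∀ i ≤ r, Cs i ≤ B.orthogonal (Cs i) ∧ finrank F (Cs i) = finrank F C + i := by
  induction r generalizing C with
  | zero => exact ⟨fun _ => C, rfl, monotone_const, fun i hi => by simp_all⟩
  | succ r ih =>
    obtain ⟨C', hCC', hC'rank, hC'⟩ := exists_le_finrank_succ_le_orthogonal hB hR hC (by omega)
    obtain ⟨Cs, hCs0, hmono, hCs⟩ := ih hC' (by omega)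
    refine ⟨fun | 0 => C | i + 1 => Cs i, rfl, monotone_nat_of_le_succ ?_, ?_⟩
    · rintro (_ | i)
      · exact hCC'.trans hCs0.ge
      · exact hmono i.le_succ
    · rintro (_ | i) hi
      · exact ⟨hC, rfl⟩
      · obtain ⟨hiso, hrank⟩ := hCs i (by omega)
        exact ⟨hiso, hrank.trans (by omega)⟩

end LinearMap.BilinForm

section DotProduct

variable {F ι : Type*} [Field F] [Fintype ι]

theorem dotProductBilin_isRefl : (dotProductBilin F F : BilinForm F (ι → F)).IsRefl :=
  fun x y h => by rwa [dotProductBilin_apply_apply, dotProduct_comm] at h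

theorem dotProductBilin_nondegenerate [DecidableEq ι] :
    (dotProductBilin F F : BilinForm F (ι → F)).Nondegenerate :=
  dotProductBilin_isRefl.nondegenerate_iff_separatingLeft.mpr fun x hx =>
    funext fun i => by simpa using hx (Pi.single i 1)

end DotProduct

theorem stmt11_general (F : Type) [Field F] [Fintype F]
    (n k : ℕ) (hn : Odd n)
    (C : Submodule F (Fin n → F)) (hdim : Module.finrank F C = k)
    (hso : ∀ x ∈ C, ∀ y ∈ C, ∑ i, x i * y i = 0) :
    ∃ Cs : ℕ → Submodule F (Fin n → F),
      Cs 0 = C ∧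
      (∀ i ≤ (n - 1) / 2 - k, ∀ x ∈ Cs i, ∀ y ∈ Cs i, ∑ j, x j * y j = 0) ∧
      (∀ i < (n - 1) / 2 - k, Cs i ≤ Cs (i + 1) ∧
        Module.finrank F (Cs (i + 1)) = Module.finrank F (Cs i) + 1) ∧
      C ≤ Cs ((n - 1) / 2 - k) ∧
      Module.finrank F (Cs ((n - 1) / 2 - k)) = (n - 1) / 2 := by
  let B : BilinForm F (Fin n → F) := dotProductBilin F F
  have hB : B.Nondegenerate := dotProductBilin_nondegenerate
  have hC : C ≤ B.orthogonal C := fun y hy x hx => hso x hx y hy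
  have hk : 2 * k ≤ n := by simpa [hdim] using B.two_mul_finrank_le_of_le_orthogonal hB hC
  obtain ⟨m, rfl⟩ := hn
  rw [show (2 * m + 1 - 1) / 2 = m by omega]
  obtain ⟨Cs, hCs0, hmono, hCs⟩ := B.exists_chain_le_orthogonal hB dotProductBilin_isRefl hC
    (m - k) (by simp only [hdim, finrank_fin_fun]; omega)
  refine ⟨Cs, hCs0, fun i hi x hx y hy => (hCs i hi).1 hy x hx,
    fun i hi => ⟨hmono i.le_succ, ?_⟩, hCs0 ▸ hmono (Nat.zero_le _), ?_⟩
  · rw [(hCs _ hi).2, (hCs _ hi.le).2]; omega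
  · rw [(hCs _ le_rfl).2]; omega

/-- over F_q with q odd, an [n,k] Euclidean self-orthogonal code with n
odd lies at the bottom of a chain of Euclidean self-orthogonal codes of length
r = (n-1)/2 - k with dimensions increasing by one; in particular C is contained in a
Euclidean self-orthogonal code of dimension (n-1)/2. -/
theorem stmt11 (F : Type) [Field F] [Fintype F] (hq : Odd (Fintype.card F))
    (n k : ℕ) (hn : Odd n)
    (C : Submodule F (Fin n → F)) (hdim : Module.finrank F C = k)
    (hso : ∀ x ∈ C, ∀ y ∈ C, ∑ i, x i * y i = 0) :
    ∃ Cs : ℕ → Submodule F (Fin n → F),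
      Cs 0 = C ∧
      (∀ i ≤ (n - 1) / 2 - k, ∀ x ∈ Cs i, ∀ y ∈ Cs i, ∑ j, x j * y j = 0) ∧
      (∀ i < (n - 1) / 2 - k, Cs i ≤ Cs (i + 1) ∧
        Module.finrank F (Cs (i + 1)) = Module.finrank F (Cs i) + 1) ∧
      C ≤ Cs ((n - 1) / 2 - k) ∧
      Module.finrank F (Cs ((n - 1) / 2 - k)) = (n - 1) / 2 :=
  stmt11_general F n k hn C hdim hso
end
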